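/- arXiv:2008.01847 — 4 statements merged into one kernel-verified Lean document; each statement's English description precedes it below -/
import Mathlib

section
/- Let X be a nonempty set. There is no bounded archimedean ℓ-algebra F together with a function f : X → F such that for every bounded archimedean ℓ-algebra A and every function g : X → A there exists a unique bal-morphism α : F → A with α ∘ f = g. Consequently, free objects on sets do not exist in the category of bounded archimedean ℓ-algebras. -/
/-- An ℓ-algebra: a commutative unital ℝ-algebra with a lattice order such that
addition is translation-invariant, products of nonnegatives are nonnegative, and
scalar multiplication by nonnegative reals preserves nonnegativity. -/
class LAlg (A : Type*) extends CommRing A, Lattice A, Algebra ℝ A where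
  add_le_add_right' : ∀ a b : A, a ≤ b → ∀ c : A, a + c ≤ b + c
  mul_nonneg' : ∀ a b : A, 0 ≤ a → 0 ≤ b → 0 ≤ a * b
  smul_nonneg' : ∀ (r : ℝ) (a : A), 0 ≤ r → 0 ≤ a → 0 ≤ r • a

/-- `A` is bounded: `1` is a strong order unit. -/
def LAlg.IsBounded (A : Type*) [LAlg A] : Prop := ∀ a : A, ∃ n : ℕ, a ≤ n • (1 : A)

/-- `A` is archimedean. -/
def LAlg.IsArch (A : Type*) [LAlg A] : Prop := ∀ a b : A, (∀ n : ℕ, n • a ≤ b) → a ≤ 0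

/-- The norm ‖a‖ = inf {r : ℝ | |a| ≤ r·1}, where |a| = a ⊔ -a. -/
noncomputable def lnorm {A : Type*} [LAlg A] (a : A) : ℝ := sInf {r : ℝ | a ⊔ -a ≤ r • (1 : A)}

/-- A bal-morphism: a unital ℝ-algebra homomorphism preserving binary joins. -/
def IsBalHom {A B : Type*} [LAlg A] [LAlg B] (α : A →ₐ[ℝ] B) : Prop :=
  ∀ a b : A, α (a ⊔ b) = α a ⊔ α b

/-!
A bal-morphism preserves joins, hence is monotone. Boundedness of `F` gives `f x₀ ≤ n • 1`
for some `n`, so every bal-morphism `α : F → ℝ` satisfies `α (f x₀) ≤ n`; but freeness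
provides one with `α (f x₀) = n + 1`.
-/

noncomputable instance : LAlg ℝ where
  add_le_add_right' _ _ h c := add_le_add_left h c
  mul_nonneg' _ _ := mul_nonneg
  smul_nonneg' _ _ := smul_nonneg

lemma LAlg.isBounded_real : LAlg.IsBounded ℝ := fun a => by
  obtain ⟨n, hn⟩ := exists_nat_ge a
  exact ⟨n, by simpa using hn⟩

lemma LAlg.isArch_real : LAlg.IsArch ℝ := fun a b hab => by
  by_contra! ha
  obtain ⟨n, hn⟩ := exists_lt_nsmul ha b
  exact (hn.trans_le (hab n)).false

lemma IsBalHom.monotone {A B : Type*} [LAlg A] [LAlg B] {α : A →ₐ[ℝ] B} (hα : IsBalHom α) :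
    Monotone α := fun a b hab => by
  rw [← sup_eq_right.mpr hab, hα]
  exact le_sup_left

theorem stmt1_general (X : Type) [Nonempty X] (F : Type) [LAlg F]
    (hFb : LAlg.IsBounded F) (f : X → F)
    (h : ∀ (A : Type) [LAlg A], LAlg.IsBounded A → LAlg.IsArch A →
      ∀ g : X → A, ∃! α : F →ₐ[ℝ] A, IsBalHom α ∧ α ∘ f = g) :
    False := by
  obtain ⟨x₀⟩ := ‹Nonempty X›
  obtain ⟨n, hn⟩ := hFb (f x₀)
  obtain ⟨α, ⟨hbal, hαf⟩, -⟩ :=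
    h ℝ LAlg.isBounded_real LAlg.isArch_real (fun _ => (n : ℝ) + 1)
  have hle : α (f x₀) ≤ α (n • 1) := hbal.monotone hn
  rw [show α (f x₀) = n + 1 from congrFun hαf x₀, map_nsmul, map_one, nsmul_one] at hle
  linarith

/-- there is no free bounded archimedean ℓ-algebra on a nonempty set. -/
theorem stmt1 (X : Type) [Nonempty X] (F : Type) [LAlg F]
    (hFb : LAlg.IsBounded F) (hFa : LAlg.IsArch F) (f : X → F)
    (h : ∀ (A : Type) [LAlg A], LAlg.IsBounded A → LAlg.IsArch A →
      ∀ g : X → A, ∃! α : F →ₐ[ℝ] A, IsBalHom α ∧ α ∘ f = g) :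
    False :=
  stmt1_general X F hFb f h
end

section
/- Let (X, w) be a weighted set. Then there exist a uniformly complete bounded archimedean ℓ-algebra B and a function f : X → B with ‖f(x)‖ ≤ w(x) for all x ∈ X, such that for every uniformly complete bounded archimedean ℓ-algebra A and every function h : X → A with ‖h(x)‖ ≤ w(x) for all x ∈ X, there is a unique bal-morphism α : B → A with α ∘ f = h. Consequently, the forgetful functor from uniformly complete bounded archimedean ℓ-algebras to weighted sets has a left adjoint. -/
/-- Uniform completeness: completeness in the metric induced by the norm `lnorm`. -/
def UnifComplete (B : Type*) [LAlg B] : Prop :=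
  ∀ u : ℕ → B, (∀ ε : ℝ, 0 < ε → ∃ N : ℕ, ∀ m ≥ N, ∀ n ≥ N, lnorm (u m - u n) ≤ ε) →
    ∃ b : B, ∀ ε : ℝ, 0 < ε → ∃ N : ℕ, ∀ n ≥ N, lnorm (u n - b) ≤ ε

/-- A bundled uniformly complete bounded archimedean ℓ-algebra (an object of ubal). -/
structure UBalObj where
  carrier : Type
  [str : LAlg carrier]
  bounded : LAlg.IsBounded carrier
  arch : LAlg.IsArch carrier
  complete : UnifComplete carrier

attribute [instance] UBalObj.str

/-!
The free algebra is a subalgebra of a product. If `h : X → A` respects the weights, the uniformly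
closed sub-ℓ-algebra of `A` generated by `h(X)` consists of uniform limits of values of ℓ-algebra
terms in `h`, so choosing approximating terms injects it into `ℕ → LTerm X`; transporting its
structure makes it a "model" carried by a set of term sequences. Models form a set, so their
product lies in `Type`, and `B` is the uniform closure of the term values in the tuple of all
generators. The lift to `A` is a projection followed by the isomorphism with the model of `h`.
It is unique because bal-morphisms commute with term evaluation and are uniformly continuous
(`|α a - α b| ≤ ε` whenever `|a - b| ≤ ε`), while `B` is the closure of the term values.
-/

namespace LAlg

variable {A : Type*} [LAlg A]

instance : IsOrderedAddMonoid A where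
  add_le_add_left := LAlg.add_le_add_right'

instance : PosSMulMono ℝ A where
  smul_le_smul_of_nonneg_left r hr a b hab := by
    simpa [smul_sub] using LAlg.smul_nonneg' r (b - a) hr (sub_nonneg.mpr hab)

instance : SMulPosMono ℝ A where
  smul_le_smul_of_nonneg_right a ha r s hrs := by
    simpa [sub_smul] using LAlg.smul_nonneg' (s - r) a (sub_nonneg.mpr hrs) ha

theorem one_nonneg (hA : IsBounded A) : (0 : A) ≤ 1 := by
  obtain ⟨n, hn⟩ := hA (1 : A)⁻
  set c : ℝ := n + 1
  have hc : 0 < c := by positivity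
  have h_le_smul_neg : (1 : A)⁻ ≤ c • (1 : A)⁻ := by
    simpa using smul_le_smul_of_nonneg_right (show (1 : ℝ) ≤ c by simp [c]) (negPart_nonneg (1 : A))
  have h_le_smul_pos : (1 : A)⁻ ≤ c • (1 : A)⁺ :=
    calc (1 : A)⁻ ≤ (n : ℝ) • (1 : A) := by rwa [Nat.cast_smul_eq_nsmul]
      _ ≤ (n : ℝ) • (1 : A)⁺ := smul_le_smul_of_nonneg_left (le_posPart 1) n.cast_nonneg
      _ ≤ c • (1 : A)⁺ := smul_le_smul_of_nonneg_right (by simp [c]) (posPart_nonneg 1)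
  -- `1⁻` is disjoint from `1⁺`, hence `c • 1⁻` is disjoint from `c • 1⁺`.
  have h_nonpos : (1 : A)⁻ ≤ 0 :=
    calc (1 : A)⁻ ≤ c • (1 : A)⁻ ⊓ c • (1 : A)⁺ := le_inf h_le_smul_neg h_le_smul_pos
      _ = c • ((1 : A)⁻ ⊓ (1 : A)⁺) := ((OrderIso.smulRight hc).map_inf _ _).symm
      _ = 0 := by rw [inf_comm, posPart_inf_negPart_eq_zero, smul_zero]
  exact negPart_eq_zero.mp (le_antisymm h_nonpos (negPart_nonneg 1))

theorem abs_smul_one_le (h1 : (0 : A) ≤ 1) (r : ℝ) : |r • (1 : A)| ≤ |r| • (1 : A) :=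
  abs_le'.mpr ⟨smul_le_smul_of_nonneg_right (le_abs_self r) h1, by
    rw [← neg_smul]; exact smul_le_smul_of_nonneg_right (neg_le_abs r) h1⟩

theorem abs_sub_le_add_smul {a b c : A} {δ₁ δ₂ : ℝ} (h₁ : |a - b| ≤ δ₁ • (1 : A))
    (h₂ : |b - c| ≤ δ₂ • (1 : A)) : |a - c| ≤ (δ₁ + δ₂) • (1 : A) :=
  calc |a - c| = |(a - b) + (b - c)| := by rw [sub_add_sub_cancel]
    _ ≤ |a - b| + |b - c| := abs_add_le _ _
    _ ≤ (δ₁ + δ₂) • (1 : A) := by rw [add_smul]; exact add_le_add h₁ h₂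

theorem abs_le_add_smul_of_abs_sub_le {a b : A} {r δ : ℝ} (ha : |a| ≤ r • (1 : A))
    (h : |a - b| ≤ δ • (1 : A)) : |b| ≤ (r + δ) • (1 : A) := by
  simpa using abs_sub_le_add_smul (a := 0) (by simpa using ha) h

theorem le_zero_of_forall_le_smul_one (hA : IsArch A) (h1 : (0 : A) ≤ 1) {c : A}
    (h : ∀ ε : ℝ, 0 < ε → c ≤ ε • (1 : A)) : c ≤ 0 := by
  refine hA c 1 fun n => ?_
  rcases n.eq_zero_or_pos with rfl | hn
  · simpa using h1
  · have hn' : (0 : ℝ) < n := by exact_mod_cast hn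
    calc n • c = (n : ℝ) • c := (Nat.cast_smul_eq_nsmul ℝ n c).symm
      _ ≤ (n : ℝ) • ((n : ℝ)⁻¹ • (1 : A)) :=
        smul_le_smul_of_nonneg_left (h _ (inv_pos.mpr hn')) hn'.le
      _ = 1 := by rw [smul_smul, mul_inv_cancel₀ hn'.ne', one_smul]

theorem eq_of_forall_abs_sub_le (hA : IsArch A) (h1 : (0 : A) ≤ 1) {a b : A}
    (h : ∀ ε : ℝ, 0 < ε → |a - b| ≤ ε • (1 : A)) : a = b := by
  have habs := le_zero_of_forall_le_smul_one hA h1 h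
  exact sub_eq_zero.mp (le_antisymm ((le_abs_self _).trans habs)
    (neg_nonpos.mp ((neg_le_abs _).trans habs)))

theorem lnorm_le {a : A} {r : ℝ} (hr : 0 ≤ r) (h : |a| ≤ r • (1 : A)) : lnorm a ≤ r := by
  by_cases hS : BddBelow {s : ℝ | |a| ≤ s • (1 : A)}
  · exact csInf_le hS h
  · exact (Real.sInf_of_not_bddBelow hS).trans_le hr

theorem abs_le_of_lnorm_le (hb : IsBounded A) (ha : IsArch A) {a : A} {r : ℝ}
    (h : lnorm a ≤ r) : |a| ≤ r • (1 : A) := by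
  set S := {s : ℝ | |a| ≤ s • (1 : A)}
  have h1 := one_nonneg hb
  have hS : S.Nonempty :=
    let ⟨n, hn⟩ := hb |a|
    ⟨n, by rwa [Set.mem_ofPred_eq, Nat.cast_smul_eq_nsmul]⟩
  refine sub_nonpos.mp (le_zero_of_forall_le_smul_one ha h1 fun ε hε => ?_)
  obtain ⟨s, hs, hsr⟩ : ∃ s ∈ S, s < r + ε := by
    by_cases hbdd : BddBelow S
    · exact exists_lt_of_csInf_lt hS (by change lnorm a < r + ε; linarith)
    · exact not_bddBelow_iff.mp hbdd _
  rw [sub_le_iff_le_add, ← add_smul, add_comm ε]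
  exact hs.trans (smul_le_smul_of_nonneg_right hsr.le h1)

theorem lnorm_le_iff (hb : IsBounded A) (ha : IsArch A) {a : A} {r : ℝ} (hr : 0 ≤ r) :
    lnorm a ≤ r ↔ |a| ≤ r • (1 : A) :=
  ⟨abs_le_of_lnorm_le hb ha, lnorm_le hr⟩

theorem abs_mul_le (a b : A) : |a * b| ≤ |a| * |b| := by
  have hmul := LAlg.mul_nonneg' (A := A)
  have ha := posPart_nonneg a
  have ha' := negPart_nonneg a
  have hb := posPart_nonneg b
  have hb' := negPart_nonneg b
  have e₁ : |a| * |b| - a * b = (a⁺ * b⁻ + a⁻ * b⁺) + (a⁺ * b⁻ + a⁻ * b⁺) := by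
    calc |a| * |b| - a * b = (a⁺ + a⁻) * (b⁺ + b⁻) - (a⁺ - a⁻) * (b⁺ - b⁻) := by
          rw [posPart_add_negPart, posPart_add_negPart, posPart_sub_negPart, posPart_sub_negPart]
      _ = _ := by ring
  have e₂ : |a| * |b| - -(a * b) = (a⁺ * b⁺ + a⁻ * b⁻) + (a⁺ * b⁺ + a⁻ * b⁻) := by
    calc |a| * |b| - -(a * b) = (a⁺ + a⁻) * (b⁺ + b⁻) + (a⁺ - a⁻) * (b⁺ - b⁻) := by
          rw [posPart_add_negPart, posPart_add_negPart, posPart_sub_negPart, posPart_sub_negPart,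
            sub_neg_eq_add]
      _ = _ := by ring
  refine abs_le'.mpr ⟨sub_nonneg.mp ?_, sub_nonneg.mp ?_⟩
  · rw [e₁]
    have := add_nonneg (hmul _ _ ha hb') (hmul _ _ ha' hb)
    exact add_nonneg this this
  · rw [e₂]
    have := add_nonneg (hmul _ _ ha hb) (hmul _ _ ha' hb')
    exact add_nonneg this this

theorem abs_mul_le_smul_one {a b : A} {r s : ℝ} (hr : 0 ≤ r) (ha : |a| ≤ r • (1 : A))
    (hb : |b| ≤ s • (1 : A)) : |a * b| ≤ (r * s) • (1 : A) :=
  calc |a * b| ≤ |a| * |b| := abs_mul_le a b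
    _ ≤ (r • (1 : A)) * |b| := by
      have := LAlg.mul_nonneg' _ _ (sub_nonneg.mpr ha) (abs_nonneg b)
      rwa [sub_mul, sub_nonneg] at this
    _ = r • |b| := smul_one_mul r _
    _ ≤ r • (s • (1 : A)) := smul_le_smul_of_nonneg_left hb hr
    _ = (r * s) • (1 : A) := smul_smul r s 1

theorem abs_mul_sub_mul_le {a b c d : A} {r s δ : ℝ} (hr : 0 ≤ r) (hδ : 0 ≤ δ)
    (ha : |a| ≤ r • (1 : A)) (hd : |d| ≤ s • (1 : A)) (hac : |a - c| ≤ δ • (1 : A))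
    (hbd : |b - d| ≤ δ • (1 : A)) : |a * b - c * d| ≤ (δ * (r + s)) • (1 : A) :=
  calc |a * b - c * d| = |a * (b - d) + (a - c) * d| := by ring_nf
    _ ≤ |a * (b - d)| + |(a - c) * d| := abs_add_le _ _
    _ ≤ (r * δ) • (1 : A) + (δ * s) • (1 : A) :=
      add_le_add (abs_mul_le_smul_one hr ha hbd) (abs_mul_le_smul_one hδ hac hd)
    _ = (δ * (r + s)) • (1 : A) := by rw [← add_smul]; ring_nf

theorem abs_sup_sub_sup_le (a b c d : A) : |a ⊔ b - c ⊔ d| ≤ |a - c| + |b - d| :=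
  calc |a ⊔ b - c ⊔ d| = |(a ⊔ b - c ⊔ b) + (b ⊔ c - d ⊔ c)| := by
        rw [sup_comm b c, sup_comm d c, sub_add_sub_cancel]
    _ ≤ |a ⊔ b - c ⊔ b| + |b ⊔ c - d ⊔ c| := abs_add_le _ _
    _ ≤ |a - c| + |b - d| :=
      add_le_add (abs_sup_sub_sup_le_abs _ _ _) (abs_sup_sub_sup_le_abs _ _ _)

def IsLimClosed (s : Set A) : Prop :=
  ∀ b : A, (∀ ε : ℝ, 0 < ε → ∃ c ∈ s, |b - c| ≤ ε • (1 : A)) → b ∈ s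

/-- Unlike `UnifComplete`, this is meaningful in unbounded algebras such as products. -/
def OrderUnitComplete (A : Type*) [LAlg A] : Prop :=
  ∀ u : ℕ → A, (∀ ε : ℝ, 0 < ε → ∃ N : ℕ, ∀ m ≥ N, ∀ n ≥ N, |u m - u n| ≤ ε • (1 : A)) →
    ∃ b : A, ∀ ε : ℝ, 0 < ε → ∃ N : ℕ, ∀ n ≥ N, |u n - b| ≤ ε • (1 : A)

theorem unifComplete_iff (hb : IsBounded A) (ha : IsArch A) :
    UnifComplete A ↔ OrderUnitComplete A := by
  have key : ∀ ε : ℝ, 0 < ε → ∀ a : A, lnorm a ≤ ε ↔ |a| ≤ ε • (1 : A) :=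
    fun ε hε _ => lnorm_le_iff hb ha hε.le
  refine forall_congr' fun u => imp_congr ?_ (exists_congr fun b => ?_) <;>
    exact forall₂_congr fun ε hε => by simp only [key ε hε]

end LAlg

instance Pi.lalg {ι : Type*} {F : ι → Type*} [∀ i, LAlg (F i)] : LAlg (∀ i, F i) where
  add_le_add_right' a b h c i := LAlg.add_le_add_right' (a i) (b i) (h i) (c i)
  mul_nonneg' a b ha hb i := LAlg.mul_nonneg' (a i) (b i) (ha i) (hb i)
  smul_nonneg' r a hr ha i := LAlg.smul_nonneg' r (a i) hr (ha i)

namespace LAlg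

variable {ι : Type*} {F : ι → Type*} [∀ i, LAlg (F i)]

theorem isArch_pi (h : ∀ i, IsArch (F i)) : IsArch (∀ i, F i) :=
  fun a b hab i => h i (a i) (b i) fun n => hab n i

theorem orderUnitComplete_pi (h : ∀ i, OrderUnitComplete (F i)) :
    OrderUnitComplete (∀ i, F i) := by
  intro u hu
  choose b hb using fun i => h i (fun n => u n i) fun ε hε =>
    (hu ε hε).imp fun N hN m hm n hn => hN m hm n hn i
  refine ⟨b, fun ε hε => ?_⟩
  obtain ⟨N, hN⟩ := hu (ε / 2) (half_pos hε)
  refine ⟨N, fun n hn i => ?_⟩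
  obtain ⟨M, hM⟩ := hb i (ε / 2) (half_pos hε)
  simpa using abs_sub_le_add_smul (hN n hn (max N M) (le_max_left N M) i)
    (hM (max N M) (le_max_right N M))

end LAlg

namespace IsBalHom

variable {A B C : Type*} [LAlg A] [LAlg B] [LAlg C] {α : A →ₐ[ℝ] B}

theorem comp {β : B →ₐ[ℝ] C} (hβ : IsBalHom β) (hα : IsBalHom α) : IsBalHom (β.comp α) :=
  fun a b => by simp only [AlgHom.comp_apply, hα a b, hβ (α a) (α b)]

theorem monotone_s14 (hα : IsBalHom α) : Monotone α := fun a b h => by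
  rw [← sup_eq_right.mpr h, hα]
  exact le_sup_left

theorem map_abs (hα : IsBalHom α) (a : A) : α |a| = |α a| := by
  rw [abs, hα, map_neg, abs]

theorem abs_sub_le (hα : IsBalHom α) {a b : A} {ε : ℝ} (h : |a - b| ≤ ε • (1 : A)) :
    |α a - α b| ≤ ε • (1 : B) := by
  simpa [hα.map_abs] using hα.monotone_s14 h

end IsBalHom

namespace LAlg

variable {Y Z : Type*} [LAlg Y] [LAlg Z] (α : Z →ₐ[ℝ] Y)

theorem isBounded_of_le_iff (hle : ∀ a b, α a ≤ α b ↔ a ≤ b) (hY : IsBounded Y) :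
    IsBounded Z := fun a =>
  let ⟨n, hn⟩ := hY (α a)
  ⟨n, by rwa [← hle, map_nsmul, map_one]⟩

theorem isArch_of_le_iff (hle : ∀ a b, α a ≤ α b ↔ a ≤ b) (hY : IsArch Y) :
    IsArch Z := fun a b hab => by
  rw [← hle, map_zero]
  exact hY _ _ fun n => by rw [← map_nsmul, hle]; exact hab n

theorem orderUnitComplete_of_le_iff (hle : ∀ a b, α a ≤ α b ↔ a ≤ b) (hα : IsBalHom α)
    (hY : OrderUnitComplete Y) (hrange : IsLimClosed (Set.range α)) : OrderUnitComplete Z := by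
  have hclose : ∀ {a b : Z} {ε : ℝ}, |α a - α b| ≤ ε • (1 : Y) ↔ |a - b| ≤ ε • (1 : Z) := by
    intro a b ε
    rw [← hle, hα.map_abs, map_sub, map_smul, map_one]
  intro u hu
  obtain ⟨y, hy⟩ := hY (α ∘ u) fun ε hε =>
    (hu ε hε).imp fun N hN m hm n hn => hclose.mpr (hN m hm n hn)
  obtain ⟨b, rfl⟩ : y ∈ Set.range α := hrange y fun ε hε =>
    let ⟨N, hN⟩ := hy ε hε
    ⟨α (u N), ⟨u N, rfl⟩, by rw [abs_sub_comm]; exact hN N le_rfl⟩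
  exact ⟨b, fun ε hε => (hy ε hε).imp fun N hN n hn => hclose.mp (hN n hn)⟩

end LAlg

structure SubLAlg (A : Type*) [LAlg A] extends Subalgebra ℝ A where
  sup_mem' {a b : A} : a ∈ carrier → b ∈ carrier → a ⊔ b ∈ carrier

namespace SubLAlg

variable {A : Type*} [LAlg A] (S : SubLAlg A)

instance : SetLike (SubLAlg A) A where
  coe S := S.carrier
  coe_injective S T h := by
    obtain ⟨S, _⟩ := S
    obtain ⟨T, _⟩ := T
    congr
    exact SetLike.coe_injective h

theorem inf_mem {a b : A} (ha : a ∈ S) (hb : b ∈ S) : a ⊓ b ∈ S := by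
  rw [← neg_neg (a ⊓ b), neg_inf]
  exact S.neg_mem (S.sup_mem' (S.neg_mem ha) (S.neg_mem hb))

instance : CommRing S := inferInstanceAs (CommRing S.toSubalgebra)
instance : Algebra ℝ S := inferInstanceAs (Algebra ℝ S.toSubalgebra)
instance : Lattice S := Subtype.lattice (fun _ _ => S.sup_mem') (fun _ _ => S.inf_mem)

instance : LAlg S where
  add_le_add_right' a b h c := LAlg.add_le_add_right' (a : A) b h c
  mul_nonneg' a b ha hb := LAlg.mul_nonneg' (a : A) b ha hb
  smul_nonneg' r a hr ha := LAlg.smul_nonneg' r (a : A) hr ha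

def valHom : S →ₐ[ℝ] A := S.toSubalgebra.val

theorem valHom_isBalHom : IsBalHom S.valHom := fun _ _ => rfl

theorem isArch (hA : LAlg.IsArch A) : LAlg.IsArch S :=
  LAlg.isArch_of_le_iff S.valHom (fun _ _ => Iff.rfl) hA

theorem orderUnitComplete (hA : LAlg.OrderUnitComplete A) (hS : LAlg.IsLimClosed (S : Set A)) :
    LAlg.OrderUnitComplete S :=
  LAlg.orderUnitComplete_of_le_iff S.valHom (fun _ _ => Iff.rfl) S.valHom_isBalHom hA
    (by rwa [show Set.range S.valHom = S from Subtype.range_coe])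

end SubLAlg

inductive LTerm (X : Type) : Type
  | var : X → LTerm X
  | const : ℝ → LTerm X
  | add : LTerm X → LTerm X → LTerm X
  | mul : LTerm X → LTerm X → LTerm X
  | sup : LTerm X → LTerm X → LTerm X

noncomputable def LTerm.eval {X : Type} {A : Type*} [LAlg A] (g : X → A) : LTerm X → A
  | var x => g x
  | const r => algebraMap ℝ A r
  | add t₁ t₂ => t₁.eval g + t₂.eval g
  | mul t₁ t₂ => t₁.eval g * t₂.eval g
  | sup t₁ t₂ => t₁.eval g ⊔ t₂.eval g

theorem IsBalHom.map_eval {X : Type} {A B : Type*} [LAlg A] [LAlg B] {α : A →ₐ[ℝ] B}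
    (hα : IsBalHom α) (g : X → A) (t : LTerm X) : α (t.eval g) = t.eval (α ∘ g) := by
  induction t with
  | var x => rfl
  | const r => exact α.commutes r
  | add t₁ t₂ ih₁ ih₂ => simp only [LTerm.eval, map_add, ih₁, ih₂]
  | mul t₁ t₂ ih₁ ih₂ => simp only [LTerm.eval, map_mul, ih₁, ih₂]
  | sup t₁ t₂ ih₁ ih₂ => simp only [LTerm.eval, hα _ _, ih₁, ih₂]

namespace LAlg

variable {X : Type} {A : Type*} [LAlg A]

def boundedElements (A : Type*) [LAlg A] : Set A := {a | ∃ n : ℕ, |a| ≤ (n : ℝ) • (1 : A)}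

def genSet (g : X → A) : Set A :=
  {a | ∀ ε : ℝ, 0 < ε → ∃ t : LTerm X, |a - t.eval g| ≤ ε • (1 : A)}

theorem mem_boundedElements_of_isBounded (hA : IsBounded A) (a : A) : a ∈ boundedElements A :=
  let ⟨n, hn⟩ := hA |a|
  ⟨n, by rwa [Nat.cast_smul_eq_nsmul]⟩

theorem eval_mem_boundedElements (h1 : (0 : A) ≤ 1) {g : X → A}
    (hg : ∀ x, g x ∈ boundedElements A) (t : LTerm X) : t.eval g ∈ boundedElements A := by
  induction t with
  | var x => exact hg x
  | const r =>
    refine ⟨⌈|r|⌉₊, ?_⟩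
    rw [LTerm.eval, Algebra.algebraMap_eq_smul_one]
    exact (abs_smul_one_le h1 r).trans (smul_le_smul_of_nonneg_right (Nat.le_ceil _) h1)
  | add t₁ t₂ ih₁ ih₂ =>
    obtain ⟨⟨n, hn⟩, ⟨m, hm⟩⟩ := And.intro ih₁ ih₂
    refine ⟨n + m, (abs_add_le _ _).trans ?_⟩
    rw [Nat.cast_add, add_smul]
    exact add_le_add hn hm
  | mul t₁ t₂ ih₁ ih₂ =>
    obtain ⟨⟨n, hn⟩, ⟨m, hm⟩⟩ := And.intro ih₁ ih₂
    exact ⟨n * m, by simpa [LTerm.eval] using abs_mul_le_smul_one n.cast_nonneg hn hm⟩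
  | sup t₁ t₂ ih₁ ih₂ =>
    obtain ⟨⟨n, hn⟩, ⟨m, hm⟩⟩ := And.intro ih₁ ih₂
    refine ⟨n + m, ?_⟩
    simpa [LTerm.eval, Nat.cast_add, add_smul] using
      (abs_sup_sub_sup_le (t₁.eval g) (t₂.eval g) 0 0).trans (add_le_add (by simpa using hn)
        (by simpa using hm))

theorem eval_mem_genSet (h1 : (0 : A) ≤ 1) (g : X → A) (t : LTerm X) : t.eval g ∈ genSet g :=
  fun ε hε => ⟨t, by simpa using smul_nonneg hε.le h1⟩

variable {g : X → A}

theorem genSet_subset_boundedElements (h1 : (0 : A) ≤ 1) (hg : ∀ x, g x ∈ boundedElements A) :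
    genSet g ⊆ boundedElements A := fun a ha => by
  obtain ⟨t, ht⟩ := ha 1 one_pos
  obtain ⟨n, hn⟩ := eval_mem_boundedElements h1 hg t
  refine ⟨n + 1, ?_⟩
  rw [abs_sub_comm] at ht
  exact_mod_cast abs_le_add_smul_of_abs_sub_le hn ht

theorem genSet_isLimClosed : IsLimClosed (genSet g) := fun b hb ε hε => by
  obtain ⟨c, hc, hbc⟩ := hb (ε / 2) (half_pos hε)
  obtain ⟨t, ht⟩ := hc (ε / 2) (half_pos hε)
  exact ⟨t, by simpa using abs_sub_le_add_smul hbc ht⟩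

theorem add_mem_genSet {a b : A} (ha : a ∈ genSet g) (hb : b ∈ genSet g) :
    a + b ∈ genSet g := fun ε hε => by
  obtain ⟨t₁, h₁⟩ := ha (ε / 2) (half_pos hε)
  obtain ⟨t₂, h₂⟩ := hb (ε / 2) (half_pos hε)
  refine ⟨.add t₁ t₂, ?_⟩
  calc |a + b - (t₁.add t₂).eval g| = |(a - t₁.eval g) + (b - t₂.eval g)| := by
        rw [LTerm.eval]; abel_nf
    _ ≤ |a - t₁.eval g| + |b - t₂.eval g| := abs_add_le _ _
    _ ≤ ε • (1 : A) := by simpa [← add_smul] using add_le_add h₁ h₂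

theorem sup_mem_genSet {a b : A} (ha : a ∈ genSet g) (hb : b ∈ genSet g) :
    a ⊔ b ∈ genSet g := fun ε hε => by
  obtain ⟨t₁, h₁⟩ := ha (ε / 2) (half_pos hε)
  obtain ⟨t₂, h₂⟩ := hb (ε / 2) (half_pos hε)
  refine ⟨.sup t₁ t₂, (abs_sup_sub_sup_le _ _ _ _).trans ?_⟩
  simpa [← add_smul] using add_le_add h₁ h₂

theorem mul_mem_genSet (h1 : (0 : A) ≤ 1) {a b : A} (ha : a ∈ genSet g) (hb : b ∈ genSet g)
    (ha' : a ∈ boundedElements A) (hb' : b ∈ boundedElements A) : a * b ∈ genSet g := by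
  obtain ⟨⟨n, hn⟩, ⟨m, hm⟩⟩ := And.intro ha' hb'
  intro ε hε
  set δ : ℝ := min 1 (ε / (n + m + 1))
  have hδ : 0 < δ := lt_min one_pos (by positivity)
  have hδ1 : δ ≤ 1 := min_le_left _ _
  have hδε : δ * (n + m + 1) ≤ ε := (le_div_iff₀ (by positivity)).mp (min_le_right _ _)
  obtain ⟨t₁, h₁⟩ := ha δ hδ
  obtain ⟨t₂, h₂⟩ := hb δ hδ
  refine ⟨.mul t₁ t₂, (abs_mul_sub_mul_le n.cast_nonneg hδ.le hn
    (abs_le_add_smul_of_abs_sub_le hm h₂) h₁ h₂).trans ?_⟩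
  exact smul_le_smul_of_nonneg_right (by nlinarith) h1

def genSubLAlg (g : X → A) (h1 : (0 : A) ≤ 1) (hg : ∀ x, g x ∈ boundedElements A) :
    SubLAlg A where
  carrier := genSet g
  algebraMap_mem' r := eval_mem_genSet h1 g (.const r)
  add_mem' := add_mem_genSet
  mul_mem' ha hb := mul_mem_genSet h1 ha hb (genSet_subset_boundedElements h1 hg ha)
    (genSet_subset_boundedElements h1 hg hb)
  sup_mem' := sup_mem_genSet

namespace genSubLAlg

variable {g : X → A} {h1 : (0 : A) ≤ 1} {hg : ∀ x, g x ∈ boundedElements A}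

def gen (x : X) : genSubLAlg g h1 hg := ⟨g x, eval_mem_genSet h1 g (.var x)⟩

theorem isBounded : IsBounded (genSubLAlg g h1 hg) := fun a => by
  obtain ⟨n, hn⟩ := genSet_subset_boundedElements h1 hg a.2
  refine ⟨n, ?_⟩
  rw [← Nat.cast_smul_eq_nsmul ℝ]
  exact (le_abs_self (a : A)).trans hn

theorem mem_genSet_gen (a : genSubLAlg g h1 hg) : a ∈ genSet (gen (h1 := h1) (hg := hg)) :=
  fun ε hε =>
    let ⟨t, ht⟩ := a.2 ε hε
    ⟨t, by
      change |(a : A) - (genSubLAlg g h1 hg).valHom (t.eval gen)| ≤ ε • (1 : A)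
      rwa [(genSubLAlg g h1 hg).valHom_isBalHom.map_eval]⟩

theorem exists_injective_termSeq (hA : IsArch A) :
    ∃ ι : genSubLAlg g h1 hg → ℕ → LTerm X, Function.Injective ι := by
  choose ι hι using fun (a : genSubLAlg g h1 hg) (n : ℕ) => a.2 (1 / (n + 1)) Nat.one_div_pos_of_nat
  refine ⟨ι, fun a b hab => Subtype.ext (eq_of_forall_abs_sub_le hA h1 fun ε hε => ?_)⟩
  obtain ⟨n, hn⟩ := exists_nat_one_div_lt (half_pos hε)
  have hb := hι b n
  rw [← hab, abs_sub_comm] at hb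
  exact (abs_sub_le_add_smul (hι a n) hb).trans (smul_le_smul_of_nonneg_right (by linarith) h1)

end genSubLAlg

end LAlg

theorem IsBalHom.ext_of_forall_mem_genSet {X : Type} {A B : Type*} [LAlg A] [LAlg B]
    (hB : LAlg.IsArch B)
    (h1 : (0 : B) ≤ 1) {g : X → A} (hg : ∀ a, a ∈ LAlg.genSet g) {α β : A →ₐ[ℝ] B}
    (hα : IsBalHom α) (hβ : IsBalHom β) (h : α ∘ g = β ∘ g) : α = β := by
  refine AlgHom.ext fun a => LAlg.eq_of_forall_abs_sub_le hB h1 fun ε hε => ?_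
  obtain ⟨t, ht⟩ := hg a (ε / 2) (half_pos hε)
  have hαt := hα.abs_sub_le ht
  have hβt := hβ.abs_sub_le ht
  rw [hα.map_eval, h, ← hβ.map_eval] at hαt
  rw [abs_sub_comm] at hβt
  simpa using LAlg.abs_sub_le_add_smul hαt hβt

protected abbrev LAlg.transport {Z Y : Type*} [LAlg Y] (e : Z ≃ Y) : LAlg Z :=
  letI := e.commRing
  letI := e.algebra ℝ
  letI := e.lattice
  { add_le_add_right' := fun a b (h : e a ≤ e b) c => show e (e.symm _) ≤ e (e.symm _) by
      simpa using add_le_add_left h (e c)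
    mul_nonneg' := fun a b (ha : e 0 ≤ e a) (hb : e 0 ≤ e b) => show e 0 ≤ e (e.symm _) by
      simp only [Equiv.zero_def, Equiv.apply_symm_apply] at ha hb ⊢
      exact LAlg.mul_nonneg' _ _ ha hb
    smul_nonneg' := fun r a hr (ha : e 0 ≤ e a) => show e 0 ≤ e (e.symm _) by
      simp only [Equiv.zero_def, Equiv.apply_symm_apply] at ha ⊢
      exact LAlg.smul_nonneg' r _ hr ha }

/-- There is only a set of models, and every algebra generated by a weight-respecting image of
`X` is isomorphic to one. -/
structure Model (X : Type) (w : X → ℝ) where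
  carrier : Set (ℕ → LTerm X)
  [lalg : LAlg carrier]
  gen : X → carrier
  bounded : LAlg.IsBounded carrier
  arch : LAlg.IsArch carrier
  complete : LAlg.OrderUnitComplete carrier
  abs_gen_le : ∀ x, |gen x| ≤ w x • (1 : carrier)

attribute [instance] Model.lalg

namespace Model

variable {X : Type} {w : X → ℝ}

theorem exists_of_injective {D : Type*} [LAlg D] (hb : LAlg.IsBounded D) (ha : LAlg.IsArch D)
    (hc : LAlg.OrderUnitComplete D) (g : X → D) (hg : ∀ x, |g x| ≤ w x • (1 : D))
    {ι : D → ℕ → LTerm X} (hι : Function.Injective ι) :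
    ∃ (i : Model X w) (ψ : i.carrier →ₐ[ℝ] D), IsBalHom ψ ∧ ψ ∘ i.gen = g := by
  let e : Set.range ι ≃ D := (Equiv.ofInjective ι hι).symm
  let _ := LAlg.transport e
  let ψ : Set.range ι →ₐ[ℝ] D := (e.algEquiv ℝ).toAlgHom
  have hle : ∀ a b, ψ a ≤ ψ b ↔ a ≤ b := fun _ _ => Iff.rfl
  have hψ : IsBalHom ψ := fun a b => e.apply_symm_apply _
  have hrange : LAlg.IsLimClosed (Set.range ψ) := by
    have hsurj : Function.Surjective ψ := (e.algEquiv ℝ).surjective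
    rw [hsurj.range_eq]
    exact fun _ _ => trivial
  refine ⟨⟨Set.range ι, e.symm ∘ g, LAlg.isBounded_of_le_iff ψ hle hb,
    LAlg.isArch_of_le_iff ψ hle ha, LAlg.orderUnitComplete_of_le_iff ψ hle hψ hc hrange,
    fun x => ?_⟩, ψ, hψ, funext fun x => e.apply_symm_apply _⟩
  rw [← hle, hψ.map_abs, map_smul, map_one]
  simpa [ψ] using hg x

theorem exists_lift (A : UBalObj) (h : X → A.carrier) (hh : ∀ x, lnorm (h x) ≤ w x) :
    ∃ (i : Model X w) (ψ : i.carrier →ₐ[ℝ] A.carrier), IsBalHom ψ ∧ ψ ∘ i.gen = h := by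
  have h1 := LAlg.one_nonneg A.bounded
  let D := LAlg.genSubLAlg h h1 fun x => LAlg.mem_boundedElements_of_isBounded A.bounded (h x)
  obtain ⟨ι, hι⟩ := LAlg.genSubLAlg.exists_injective_termSeq (g := h) (h1 := h1) A.arch
  obtain ⟨i, ψ, hψ, hψg⟩ := exists_of_injective LAlg.genSubLAlg.isBounded (D.isArch A.arch)
    (D.orderUnitComplete ((LAlg.unifComplete_iff A.bounded A.arch).mp A.complete)
      LAlg.genSet_isLimClosed)
    LAlg.genSubLAlg.gen (fun x => LAlg.abs_le_of_lnorm_le A.bounded A.arch (hh x)) hι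
  refine ⟨i, D.valHom.comp ψ, D.valHom_isBalHom.comp hψ, ?_⟩
  rw [AlgHom.coe_comp, Function.comp_assoc, hψg]
  rfl

end Model

abbrev ModelProduct (X : Type) (w : X → ℝ) : Type := ∀ i : Model X w, i.carrier

namespace ModelProduct

variable {X : Type} {w : X → ℝ}

def gen (x : X) : ModelProduct X w := fun i => i.gen x

theorem abs_gen_le (x : X) : |gen x| ≤ w x • (1 : ModelProduct X w) := fun i => i.abs_gen_le x

theorem one_nonneg : (0 : ModelProduct X w) ≤ 1 := fun i => LAlg.one_nonneg i.bounded

theorem gen_mem_boundedElements (x : X) : gen x ∈ LAlg.boundedElements (ModelProduct X w) :=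
  ⟨⌈w x⌉₊, (abs_gen_le x).trans (smul_le_smul_of_nonneg_right (Nat.le_ceil _) one_nonneg)⟩

end ModelProduct

def freeSubLAlg (X : Type) (w : X → ℝ) : SubLAlg (ModelProduct X w) :=
  LAlg.genSubLAlg ModelProduct.gen ModelProduct.one_nonneg ModelProduct.gen_mem_boundedElements

def FreeUBal (X : Type) (w : X → ℝ) : UBalObj where
  carrier := freeSubLAlg X w
  bounded := LAlg.genSubLAlg.isBounded
  arch := SubLAlg.isArch _ (LAlg.isArch_pi fun i => i.arch)
  complete := (LAlg.unifComplete_iff LAlg.genSubLAlg.isBounded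
    (SubLAlg.isArch _ (LAlg.isArch_pi fun i => i.arch))).mpr
    (SubLAlg.orderUnitComplete _ (LAlg.orderUnitComplete_pi fun i => i.complete)
      LAlg.genSet_isLimClosed)

namespace FreeUBal

variable {X : Type} {w : X → ℝ}

def gen : X → (FreeUBal X w).carrier := LAlg.genSubLAlg.gen

theorem lnorm_gen_le {x : X} (hx : 0 ≤ w x) : lnorm (gen (w := w) x) ≤ w x :=
  LAlg.lnorm_le hx (ModelProduct.abs_gen_le x)

theorem exists_lift (A : UBalObj) (h : X → A.carrier) (hh : ∀ x, lnorm (h x) ≤ w x) :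
    ∃ α : (FreeUBal X w).carrier →ₐ[ℝ] A.carrier, IsBalHom α ∧ α ∘ gen = h := by
  obtain ⟨i, ψ, hψ, hψg⟩ := Model.exists_lift A h hh
  let π : ModelProduct X w →ₐ[ℝ] i.carrier := Pi.evalAlgHom ℝ (fun i : Model X w => i.carrier) i
  have hπ : IsBalHom π := fun _ _ => rfl
  exact ⟨ψ.comp (π.comp (freeSubLAlg X w).valHom),
    hψ.comp (hπ.comp (freeSubLAlg X w).valHom_isBalHom), hψg⟩

theorem hom_ext (A : UBalObj) {α β : (FreeUBal X w).carrier →ₐ[ℝ] A.carrier}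
    (hα : IsBalHom α) (hβ : IsBalHom β) (h : α ∘ gen = β ∘ gen) : α = β :=
  IsBalHom.ext_of_forall_mem_genSet A.arch (LAlg.one_nonneg A.bounded)
    LAlg.genSubLAlg.mem_genSet_gen hα hβ h

end FreeUBal

/-- the free uniformly complete bounded archimedean ℓ-algebra on a
weighted set (X, w) exists; consequently the forgetful functor ubal → WSet has a
left adjoint. -/
theorem stmt14 (X : Type) (w : X → ℝ) (hw : ∀ x, 0 ≤ w x) :
    ∃ (B : UBalObj) (f : X → B.carrier),
      (∀ x, lnorm (f x) ≤ w x) ∧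
      ∀ (A : UBalObj) (h : X → A.carrier), (∀ x, lnorm (h x) ≤ w x) →
        ∃! α : B.carrier →ₐ[ℝ] A.carrier, IsBalHom α ∧ α ∘ f = h := by
  refine ⟨FreeUBal X w, FreeUBal.gen, fun x => FreeUBal.lnorm_gen_le (hw x), fun A h hh => ?_⟩
  obtain ⟨α, hα, hαh⟩ := FreeUBal.exists_lift A h hh
  exact ⟨α, ⟨hα, hαh⟩, fun β ⟨hβ, hβh⟩ => FreeUBal.hom_ext A hβ hα (hβh.trans hαh.symm)⟩
end

section
/- Let X be a nonempty set. There is no basic algebra F together with a function f : X → F such that for every basic algebra C and every function g : X → C there exists a unique normal homomorphism γ : F → C with γ ∘ f = g. Consequently, the forgetful functor from basic algebras (with normal homomorphisms) to sets has no left adjoint. -/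
/-- Dedekind completeness: every nonempty subset bounded above has a supremum. -/
def DedekindComplete (C : Type*) [LAlg C] : Prop :=
  ∀ S : Set C, S.Nonempty → BddAbove S → ∃ c : C, IsLUB S c

/-- `a` is an atom of the boolean algebra of idempotents (where `f ≤ e` iff `f * e = f`). -/
def IsIdemAtom {C : Type*} [LAlg C] (a : C) : Prop :=
  a * a = a ∧ a ≠ 0 ∧ ∀ f : C, f * f = f → f * a = f → f = 0 ∨ f = a

/-- The boolean algebra of idempotents of `C` is atomic. -/
def IdemAtomic (C : Type*) [LAlg C] : Prop :=
  ∀ e : C, e * e = e → e ≠ 0 → ∃ a : C, IsIdemAtom a ∧ a * e = a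

/-- A basic algebra: a Dedekind complete bounded archimedean ℓ-algebra whose boolean
algebra of idempotents is atomic. -/
def IsBasic (C : Type*) [LAlg C] : Prop :=
  LAlg.IsBounded C ∧ LAlg.IsArch C ∧ DedekindComplete C ∧ IdemAtomic C

/-- A normal homomorphism: a bal-morphism preserving all existing suprema and infima. -/
def IsNormal {A B : Type*} [LAlg A] [LAlg B] (γ : A →ₐ[ℝ] B) : Prop :=
  IsBalHom γ ∧
  (∀ (S : Set A) (a : A), IsLUB S a → IsLUB (γ '' S) (γ a)) ∧
  (∀ (S : Set A) (a : A), IsGLB S a → IsGLB (γ '' S) (γ a))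

/-!
Since `F` is bounded, `f x₀ ≤ n • 1` for some `n : ℕ`. A normal homomorphism preserves binary joins,
hence is monotone, so every normal `γ : F → ℝ` satisfies `γ (f x₀) ≤ n`. This rules out the
homomorphism that the universal property provides for the constant map `X → ℝ` with value `n + 1`.
-/

noncomputable instance Real.instLAlg : LAlg ℝ where
  add_le_add_right' _ _ hab c := add_le_add_left hab c
  mul_nonneg' _ _ := mul_nonneg
  smul_nonneg' _ _ := smul_nonneg

lemma Real.isIdemAtom_one : IsIdemAtom (1 : ℝ) :=
  ⟨one_mul 1, one_ne_zero, fun _ he _ => IsIdempotentElem.iff_eq_zero_or_one.mp he⟩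

lemma Real.idemAtomic : IdemAtomic ℝ := by
  intro e he he0
  obtain rfl : e = 1 := (IsIdempotentElem.iff_eq_zero_or_one.mp he).resolve_left he0
  exact ⟨1, Real.isIdemAtom_one, one_mul 1⟩

lemma Real.isBasic : IsBasic ℝ := by
  refine ⟨fun a => ⟨⌈a⌉₊, by simpa using Nat.le_ceil a⟩, fun a b hab => ?_,
    fun _ hne hbdd => Real.exists_isLUB hne hbdd, Real.idemAtomic⟩
  by_contra! ha
  obtain ⟨n, hn⟩ := exists_lt_nsmul ha b
  exact (hab n).not_gt hn

/-- there is no free basic algebra on a nonempty set; the forgetful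
functor from basic algebras (with normal homomorphisms) to sets has no left adjoint. -/
theorem stmt17 (X : Type) [Nonempty X] (F : Type) [LAlg F]
    (hF : IsBasic F) (f : X → F)
    (h : ∀ (C : Type) [LAlg C], IsBasic C →
      ∀ g : X → C, ∃! γ : F →ₐ[ℝ] C, IsNormal γ ∧ γ ∘ f = g) :
    False := by
  obtain ⟨x₀⟩ := ‹Nonempty X›
  obtain ⟨n, hn⟩ := hF.1 (f x₀)
  obtain ⟨γ, ⟨⟨hbal, -, -⟩, hγf⟩, -⟩ := h ℝ Real.isBasic fun _ => (n : ℝ) + 1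
  have hle : γ (f x₀) ≤ γ (n • 1) := hbal.monotone hn
  rw [← Function.comp_apply (f := γ), hγf, map_nsmul, map_one, nsmul_one] at hle
  linarith
end

section
/- Let X be a nonempty set. There is no unital vector lattice (F, u) together with a function f : X → F such that for every unital vector lattice (V, v) and every function g : X → V there exists a unique unital vector lattice homomorphism α : F → V with α ∘ f = g. Consequently, the forgetful functor from unital vector lattices to sets has no left adjoint. -/
/-! Homomorphisms into `(ℝ, 1)` are bounded on each element `a` by any `n` with
`a ≤ n • u`, independently of the homomorphism. A free object on `X` would instead admit,
for every `x` and every real `r`, a homomorphism sending `f x` to `r`. -/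

/-- A vector lattice (Riesz space): a real vector space with a lattice order such that
addition is translation-invariant and scalar multiplication by nonnegative reals
preserves nonnegativity. -/
class VLat (V : Type*) extends AddCommGroup V, Module ℝ V, Lattice V where
  add_le_add_right' : ∀ a b : V, a ≤ b → ∀ c : V, a + c ≤ b + c
  smul_nonneg' : ∀ (r : ℝ) (a : V), 0 ≤ r → 0 ≤ a → 0 ≤ r • a

/-- `u` is a strong order unit of `V`. -/
def IsStrongUnit {V : Type*} [VLat V] (u : V) : Prop := ∀ a : V, ∃ n : ℕ, a ≤ n • u

/-- The norm ‖a‖ = inf {r : ℝ | |a| ≤ r·u} of a unital vector lattice (V, u),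
where |a| = a ⊔ -a. -/
noncomputable def vnorm {V : Type*} [VLat V] (u : V) (a : V) : ℝ :=
  sInf {r : ℝ | a ⊔ -a ≤ r • u}

/-- A unital vector lattice homomorphism (V, u) → (W, v): a linear map preserving
binary joins and sending `u` to `v`. -/
def IsUVLatHom {V W : Type*} [VLat V] [VLat W] (u : V) (v : W) (α : V →ₗ[ℝ] W) : Prop :=
  (∀ a b : V, α (a ⊔ b) = α a ⊔ α b) ∧ α u = v

instance Real.instVLat : VLat ℝ where
  add_le_add_right' _ _ hab c := add_le_add_left hab c
  smul_nonneg' _ _ hr ha := smul_nonneg hr ha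

theorem Real.isStrongUnit_one : IsStrongUnit (1 : ℝ) := fun a => by
  obtain ⟨n, hn⟩ := exists_nat_ge a
  exact ⟨n, by simpa using hn⟩

section

variable {V W : Type*} [VLat V] [VLat W] {u : V} {v : W} {α : V →ₗ[ℝ] W}

theorem IsUVLatHom.monotone (hα : IsUVLatHom u v α) : Monotone α := fun a b hab =>
  le_of_sup_eq (by rw [← hα.1, sup_eq_right.mpr hab])

theorem IsUVLatHom.map_le_nsmul {a : V} {n : ℕ} (hα : IsUVLatHom u v α) (ha : a ≤ n • u) :
    α a ≤ n • v := by
  simpa only [map_nsmul, hα.2] using hα.monotone ha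

end

theorem IsStrongUnit.exists_bound_real_hom {V : Type*} [VLat V] {u : V} (hu : IsStrongUnit u)
    (a : V) : ∃ C : ℝ, ∀ α : V →ₗ[ℝ] ℝ, IsUVLatHom u 1 α → α a ≤ C := by
  obtain ⟨n, hn⟩ := hu a
  exact ⟨n, fun α hα => by simpa using hα.map_le_nsmul hn⟩

/-- there is no free unital vector lattice on a nonempty set; the
forgetful functor from unital vector lattices to sets has no left adjoint. -/
theorem stmt18 (X : Type) [Nonempty X] (F : Type) [VLat F] (u : F)
    (hu : IsStrongUnit u) (f : X → F)
    (h : ∀ (V : Type) [VLat V], ∀ v : V, IsStrongUnit v →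
      ∀ g : X → V, ∃! α : F →ₗ[ℝ] V, IsUVLatHom u v α ∧ α ∘ f = g) :
    False := by
  obtain ⟨x⟩ := ‹Nonempty X›
  obtain ⟨C, hC⟩ := hu.exists_bound_real_hom (f x)
  obtain ⟨α, ⟨hα, hαf⟩, -⟩ := h ℝ 1 Real.isStrongUnit_one fun _ => C + 1
  have : α (f x) = C + 1 := congrFun hαf x
  linarith [hC α hα]
end
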